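/- Let O be the real algebra with basis {e^x : x ∈ F_8} and multiplication e^x e^y = (-1)^{tr(y x^6)} e^{x+y}. Then O is a division algebra: every nonzero a ∈ O has a two-sided multiplicative inverse, namely a*/N(a). -/

import Mathlib

open scoped Classical
noncomputable section

abbrev F8 := GaloisField 2 3

instance : Fintype F8 := Fintype.ofFinite F8

def tr (x : F8) : F8 := x + x ^ 2 + x ^ 4

/-- The sign `(-1)^{φ(x,y)}` where `φ(x,y) = tr(y x⁶)`. -/
def sgn (x y : F8) : ℝ := if tr (y * x ^ 6) = 0 then 1 else -1

/-- Multiplication of the twisted group algebra `ℝ_σ[F₈]`, on coordinates: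
octonions are functions `F8 → ℝ`, and `e^x e^y = (-1)^{tr(y x⁶)} e^{x+y}`. -/
def omul (a b : F8 → ℝ) : F8 → ℝ := fun z => ∑ x : F8, sgn x (z + x) * a x * b (z + x)

/-- The basis element `e^x`. -/
def e (x : F8) : F8 → ℝ := fun w => if w = x then 1 else 0

/-- Octonion conjugation: `a* = Re(a) - Im(a)`. -/
def conj (a : F8 → ℝ) : F8 → ℝ := fun w => if w = 0 then a 0 else - a w

/-- The norm `N(a) = Σ aₓ²`. -/
def N (a : F8 → ℝ) : ℝ := ∑ x : F8, (a x) ^ 2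

/-!
It suffices to show `a a* = a* a = N(a) e⁰`. The sign `sgn x y = (-1)^{tr(y x⁶)}` is `1` when
`x = 0` or `y = 0`, is `-1` on the diagonal `x = y ≠ 0`, and is antisymmetric on distinct nonzero
`x, y`: there `x y⁶ = (y x⁶)⁻¹`, and for `s ∉ {0, 1}` one has
`tr s + tr s⁻¹ = s + s² + ⋯ + s⁶ = 1` because `s⁷ = 1`. Hence in the coefficient of `e^z`, `z ≠ 0`,
of `a a*` and of `a* a` the terms indexed by `x` and `z + x` cancel, while the coefficient of `e⁰`
is `Σ sgn x x (±aₓ) aₓ = Σ aₓ² = N(a)`.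
-/

namespace F8

theorem card_eq : Fintype.card F8 = 8 := by
  rw [← Nat.card_eq_fintype_card, GaloisField.card 2 3 (by norm_num)]
  norm_num

theorem pow_seven_eq_one {x : F8} (hx : x ≠ 0) : x ^ 7 = 1 := by
  simpa [card_eq] using FiniteField.pow_card_sub_one_eq_one x hx

end F8

open F8

theorem tr_zero : tr 0 = 0 := by simp [tr]

theorem tr_one : tr 1 = 1 := by simp [tr, CharTwo.add_self_eq_zero]

theorem tr_eq_zero_or_eq_one (x : F8) : tr x = 0 ∨ tr x = 1 := by
  have hfrob : tr x * (tr x - 1) = 0 := by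
    have hx8 : x ^ 8 = x := by simpa [card_eq] using FiniteField.pow_card x
    unfold tr
    linear_combination hx8 + (x ^ 3 + x ^ 5 + x ^ 6) * (CharTwo.two_eq_zero : (2 : F8) = 0)
  rcases mul_eq_zero.1 hfrob with h | h
  · exact Or.inl h
  · exact Or.inr (sub_eq_zero.1 h)

theorem tr_add_tr_inv {s : F8} (h0 : s ≠ 0) (h1 : s ≠ 1) : tr s + tr s⁻¹ = 1 := by
  have h7 : s ^ 7 = 1 := pow_seven_eq_one h0
  have hinv : s⁻¹ = s ^ 6 := inv_eq_of_mul_eq_one_right (by linear_combination h7)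
  have hgeom : 1 + s + s ^ 2 + s ^ 3 + s ^ 4 + s ^ 5 + s ^ 6 = 0 := by
    have : (s - 1) * (1 + s + s ^ 2 + s ^ 3 + s ^ 4 + s ^ 5 + s ^ 6) = 0 := by
      linear_combination h7
    exact (mul_eq_zero.1 this).resolve_left (sub_ne_zero.2 h1)
  rw [hinv, tr, tr]
  linear_combination hgeom - (CharTwo.two_eq_zero : (2 : F8) = 0) +
    (s ^ 5 + s ^ 3 * (s ^ 7 + 1) + s ^ 17) * h7

theorem sgn_zero_left (y : F8) : sgn 0 y = 1 := by simp [sgn, tr_zero]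

theorem sgn_zero_right (x : F8) : sgn x 0 = 1 := by simp [sgn, tr_zero]

theorem sgn_self {x : F8} (hx : x ≠ 0) : sgn x x = -1 := by
  have : x * x ^ 6 = 1 := by linear_combination pow_seven_eq_one hx
  simp [sgn, this, tr_one]

theorem sgn_antisymm {x y : F8} (hx : x ≠ 0) (hy : y ≠ 0) (hxy : x ≠ y) :
    sgn x y = -sgn y x := by
  have hs0 : y * x ^ 6 ≠ 0 := mul_ne_zero hy (pow_ne_zero _ hx)
  have hs1 : y * x ^ 6 ≠ 1 := by
    intro h
    apply hxy
    linear_combination y * pow_seven_eq_one hx - x * h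
  have hinv : (y * x ^ 6)⁻¹ = x * y ^ 6 := inv_eq_of_mul_eq_one_right (by
    linear_combination y ^ 7 * pow_seven_eq_one hx + pow_seven_eq_one hy)
  have hsum := tr_add_tr_inv hs0 hs1
  rw [hinv] at hsum
  unfold sgn
  rcases tr_eq_zero_or_eq_one (y * x ^ 6) with h | h
  · have h' : tr (x * y ^ 6) = 1 := by linear_combination hsum - h
    simp [h, h']
  · have h' : tr (x * y ^ 6) = 0 := by linear_combination hsum - h
    simp [h, h']

def conjSign (x : F8) : ℝ := if x = 0 then 1 else -1

theorem conj_apply (a : F8 → ℝ) (x : F8) : conj a x = conjSign x * a x := by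
  by_cases hx : x = 0
  · subst hx; simp [conj, conjSign]
  · simp [conj, conjSign, hx]

theorem conjSign_mul_self (x : F8) : conjSign x * conjSign x = 1 := by
  unfold conjSign; split_ifs <;> norm_num

theorem sgn_self_eq_conjSign (x : F8) : sgn x x = conjSign x := by
  by_cases hx : x = 0
  · subst hx; simp [sgn_zero_left, conjSign]
  · simp [sgn_self hx, conjSign, hx]

theorem sgn_mul_conjSign_antisymm {x y : F8} (hxy : x ≠ y) :
    sgn x y * conjSign x = -(sgn y x * conjSign y) := by
  by_cases hx : x = 0
  · subst hx
    simp [sgn_zero_left, sgn_zero_right, conjSign, Ne.symm hxy]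
  by_cases hy : y = 0
  · subst hy
    simp [sgn_zero_left, sgn_zero_right, conjSign, hx]
  simp [sgn_antisymm hx hy hxy, conjSign, hx, hy]

theorem sgn_mul_conjSign_antisymm' {x y : F8} (hxy : x ≠ y) :
    sgn x y * conjSign y = -(sgn y x * conjSign x) := by
  linear_combination (conjSign x * conjSign y) * sgn_mul_conjSign_antisymm hxy +
    -sgn x y * conjSign y * conjSign_mul_self x - sgn y x * conjSign x * conjSign_mul_self y

theorem omul_apply_zero (u v : F8 → ℝ) : omul u v 0 = ∑ x, sgn x x * u x * v x := by
  simp only [omul, zero_add]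

theorem omul_apply_eq_zero {u v : F8 → ℝ} {z : F8} (hz : z ≠ 0)
    (hswap : ∀ x y, x ≠ y → sgn y x * u y * v x = -(sgn x y * u x * v y)) :
    omul u v z = 0 := by
  have hne : ∀ x : F8, x ≠ z + x := fun x h => hz (by simpa using h.symm)
  refine Finset.sum_involution (fun x _ => z + x) (fun x _ => ?_) (fun x _ _ => (hne x).symm)
    (fun _ _ => Finset.mem_univ _) (fun x _ => CharTwo.add_cancel_left z x)
  rw [CharTwo.add_cancel_left, hswap x (z + x) (hne x), add_neg_cancel]

theorem omul_eq_smul_e_zero {a u v : F8 → ℝ} (hdiag : ∀ x, sgn x x * u x * v x = a x ^ 2)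
    (hswap : ∀ x y, x ≠ y → sgn y x * u y * v x = -(sgn x y * u x * v y)) :
    omul u v = N a • e 0 := by
  funext z
  by_cases hz : z = 0
  · subst hz
    simp [omul_apply_zero, hdiag, N, e]
  · simp [omul_apply_eq_zero hz hswap, e, hz]

theorem omul_conj_right (a : F8 → ℝ) : omul a (conj a) = N a • e 0 := by
  refine omul_eq_smul_e_zero (fun x => ?_) (fun x y hxy => ?_)
  · rw [conj_apply, sgn_self_eq_conjSign]
    linear_combination a x ^ 2 * conjSign_mul_self x
  · rw [conj_apply, conj_apply]
    linear_combination a x * a y * sgn_mul_conjSign_antisymm' hxy.symm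

theorem omul_conj_left (a : F8 → ℝ) : omul (conj a) a = N a • e 0 := by
  refine omul_eq_smul_e_zero (fun x => ?_) (fun x y hxy => ?_)
  · rw [conj_apply, sgn_self_eq_conjSign]
    linear_combination a x ^ 2 * conjSign_mul_self x
  · rw [conj_apply, conj_apply]
    linear_combination a x * a y * sgn_mul_conjSign_antisymm hxy.symm

theorem omul_smul_left (c : ℝ) (a b : F8 → ℝ) : omul (c • a) b = c • omul a b := by
  funext z
  simp only [omul, Pi.smul_apply, smul_eq_mul, Finset.mul_sum]
  exact Finset.sum_congr rfl fun _ _ => by ring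

theorem omul_smul_right (c : ℝ) (a b : F8 → ℝ) : omul a (c • b) = c • omul a b := by
  funext z
  simp only [omul, Pi.smul_apply, smul_eq_mul, Finset.mul_sum]
  exact Finset.sum_congr rfl fun _ _ => by ring

theorem N_eq_zero_iff {a : F8 → ℝ} : N a = 0 ↔ a = 0 := by
  simp [N, Finset.sum_eq_zero_iff_of_nonneg, sq_nonneg, funext_iff]

theorem division_algebra (a : F8 → ℝ) (ha : a ≠ 0) :
    omul a ((N a)⁻¹ • conj a) = e 0 ∧ omul ((N a)⁻¹ • conj a) a = e 0 := by
  have hN : N a ≠ 0 := mt N_eq_zero_iff.1 ha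
  constructor
  · rw [omul_smul_right, omul_conj_right, smul_smul, inv_mul_cancel₀ hN, one_smul]
  · rw [omul_smul_left, omul_conj_left, smul_smul, inv_mul_cancel₀ hN, one_smul]
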